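/- For every natural number n ≥ 0, with T_6 = {12, 12̄, 2̄1̄}, one has b_n(T_6) = F_{2n+1}, the (2n+1)-st Fibonacci number. -/
import Mathlib


/-- A signed permutation of length `n`: a permutation of `Fin n` (the absolute
values) together with a sign (bar) for each position. -/
abbrev SignedPerm (n : ℕ) := Equiv.Perm (Fin n) × (Fin n → Bool)

/-- `α` contains the signed pattern `τ`. -/
def SPContains {n k : ℕ} (α : SignedPerm n) (τ : SignedPerm k) : Prop :=
  ∃ f : Fin k → Fin n, StrictMono f ∧
    (∀ p q : Fin k, τ.1 p < τ.1 q ↔ α.1 (f p) < α.1 (f q)) ∧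
    ∀ j : Fin k, α.2 (f j) = τ.2 j

/-- `α` avoids every pattern in `T`. -/
def AvoidsAll {n k : ℕ} (T : Set (SignedPerm k)) (α : SignedPerm n) : Prop :=
  ∀ τ ∈ T, ¬ SPContains α τ

/-- `bn n T` is the number of signed permutations in `B_n` avoiding all patterns of `T`. -/
noncomputable def bn (n : ℕ) (T : Set (SignedPerm 2)) : ℕ :=
  Nat.card {α : SignedPerm n // AvoidsAll T α}

def p12   : SignedPerm 2 := (Equiv.refl (Fin 2), ![false, false])
def p21   : SignedPerm 2 := (Equiv.swap 0 1,     ![false, false])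
def p12b  : SignedPerm 2 := (Equiv.refl (Fin 2), ![false, true])
def p1b2  : SignedPerm 2 := (Equiv.refl (Fin 2), ![true, false])
def p21b  : SignedPerm 2 := (Equiv.swap 0 1,     ![false, true])
def p2b1  : SignedPerm 2 := (Equiv.swap 0 1,     ![true, false])
def p1b2b : SignedPerm 2 := (Equiv.refl (Fin 2), ![true, true])
def p2b1b : SignedPerm 2 := (Equiv.swap 0 1,     ![true, true])

def Good {n : ℕ} (α : SignedPerm n) : Prop :=
  (∀ i j : Fin n, i < j → α.2 i = false → α.1 j < α.1 i) ∧
  (∀ i j : Fin n, i < j → α.2 i = true → α.2 j = true → α.1 i < α.1 j)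

instance {n : ℕ} : DecidablePred (Good (n := n)) := fun _ => by
  unfold Good; infer_instance

lemma strictMono_pair {n : ℕ} {i j : Fin n} (h : i < j) : StrictMono ![i, j] := by
  intro p q hpq
  fin_cases p <;> fin_cases q <;> simp_all <;> omega

lemma contains2_iff {n : ℕ} (α : SignedPerm n) (τ : SignedPerm 2) :
    SPContains α τ ↔ ∃ i j : Fin n, i < j ∧
      (τ.1 0 < τ.1 1 ↔ α.1 i < α.1 j) ∧ α.2 i = τ.2 0 ∧ α.2 j = τ.2 1 := by
  constructor
  · rintro ⟨f, hm, hiso, hbar⟩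
    exact ⟨f 0, f 1, hm (by norm_num : (0:Fin 2) < 1), hiso 0 1, hbar 0, hbar 1⟩
  · rintro ⟨i, j, hij, hiso, hb0, hb1⟩
    refine ⟨![i, j], strictMono_pair hij, ?_, ?_⟩
    · intro p q
      fin_cases p <;> fin_cases q <;> simp only [Matrix.cons_val_zero, Matrix.cons_val_one,
        Matrix.head_cons]
      · simp
      · exact hiso
      · constructor
        · intro h
          have h2 : ¬ τ.1 0 < τ.1 1 := lt_asymm h
          have h3 : α.1 i ≠ α.1 j := fun hc => by
            have := α.1.injective hc; exact absurd this (Fin.ne_of_lt hij)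
          rcases lt_or_gt_of_ne h3 with h4 | h4
          · exact absurd (hiso.mpr h4) h2
          · exact h4
        · intro h
          have h2 : ¬ α.1 i < α.1 j := lt_asymm h
          have h3 : τ.1 0 ≠ τ.1 1 := fun hc => by
            have := τ.1.injective hc; simp at this
          rcases lt_or_gt_of_ne h3 with h4 | h4
          · exact absurd (hiso.mp h4) h2
          · exact h4
      · simp
    · intro k
      fin_cases k <;> simpa

lemma avoids_iff_good {n : ℕ} (α : SignedPerm n) :
    AvoidsAll {p12, p12b, p2b1b} α ↔ Good α := by
  constructor
  · intro h
    constructor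
    · intro i j hij hb
      by_contra hc
      have hne : α.1 i ≠ α.1 j := fun e => absurd (α.1.injective e) (Fin.ne_of_lt hij)
      have hlt : α.1 i < α.1 j := lt_of_le_of_ne (not_lt.mp hc) hne
      cases hbj : α.2 j
      · exact h p12 (by simp) ((contains2_iff α p12).mpr
          ⟨i, j, hij, by simpa [p12] using hlt, by simp [p12, hb], by simp [p12, hbj]⟩)
      · exact h p12b (by simp) ((contains2_iff α p12b).mpr
          ⟨i, j, hij, by simpa [p12b] using hlt, by simp [p12b, hb], by simp [p12b, hbj]⟩)
    · intro i j hij hbi hbj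
      by_contra hc
      have hne : α.1 j ≠ α.1 i := fun e => absurd (α.1.injective e) (Fin.ne_of_lt hij).symm
      have hlt : α.1 j < α.1 i := lt_of_le_of_ne (not_lt.mp hc) hne
      refine h p2b1b (by simp) ((contains2_iff α p2b1b).mpr
        ⟨i, j, hij, ?_, by simp [p2b1b, hbi], by simp [p2b1b, hbj]⟩)
      simp only [p2b1b, Equiv.swap_apply_left, Equiv.swap_apply_right]
      constructor
      · intro h'; exact absurd h' (by decide)
      · intro h'; exact absurd h' (lt_asymm hlt)
  · intro hg τ hτ hcon
    rw [contains2_iff] at hcon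
    obtain ⟨i, j, hij, hiso, hb0, hb1⟩ := hcon
    simp only [Set.mem_insert_iff, Set.mem_singleton_iff] at hτ
    rcases hτ with rfl | rfl | rfl
    · have h1 : α.1 i < α.1 j := hiso.mp (by simp [p12])
      have h2 : α.1 j < α.1 i := hg.1 i j hij (by simpa [p12] using hb0)
      exact absurd h1 (lt_asymm h2)
    · have h1 : α.1 i < α.1 j := hiso.mp (by simp [p12b])
      have h2 : α.1 j < α.1 i := hg.1 i j hij (by simpa [p12b] using hb0)
      exact absurd h1 (lt_asymm h2)
    · have h1 : α.1 i < α.1 j := hg.2 i j hij (by simpa [p2b1b] using hb0)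
        (by simpa [p2b1b] using hb1)
      have h2 : ¬ α.1 i < α.1 j := fun h' => by
        have := hiso.mpr h'
        simp only [p2b1b, Equiv.swap_apply_left, Equiv.swap_apply_right] at this
        exact absurd this (by decide)
      exact h2 h1

open Equiv

/-- prepend value `0` at position `0` -/
def consZero {n : ℕ} (σ : Perm (Fin n)) : Perm (Fin (n+1)) where
  toFun := Fin.cases 0 (fun i => (σ i).succ)
  invFun := Fin.cases 0 (fun i => (σ.symm i).succ)
  left_inv i := by cases i using Fin.cases <;> simp
  right_inv i := by cases i using Fin.cases <;> simp

/-- prepend value `last` at position `0` -/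
def consMax {n : ℕ} (σ : Perm (Fin n)) : Perm (Fin (n+1)) where
  toFun := Fin.cases (Fin.last n) (fun i => (σ i).castSucc)
  invFun := Fin.lastCases 0 (fun j => (σ.symm j).succ)
  left_inv i := by
    cases i using Fin.cases with
    | zero => simp
    | succ i => simp
  right_inv j := by
    cases j using Fin.lastCases with
    | last => simp
    | cast j => simp

/-- append value `0` at position `last` -/
def snocZero {n : ℕ} (σ : Perm (Fin n)) : Perm (Fin (n+1)) where
  toFun := Fin.lastCases 0 (fun i => (σ i).succ)
  invFun := Fin.cases (Fin.last n) (fun j => (σ.symm j).castSucc)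
  left_inv i := by
    cases i using Fin.lastCases with
    | last => simp
    | cast i => simp [Fin.succ_ne_zero]
  right_inv j := by
    cases j using Fin.cases with
    | zero => simp
    | succ j => simp [Fin.succ_ne_zero]

def dropZero {n : ℕ} (σ : Perm (Fin (n+1))) (h0 : σ 0 = 0) : Perm (Fin n) where
  toFun i := (σ i.succ).pred
    (fun hc => Fin.succ_ne_zero i (σ.injective (hc.trans h0.symm)))
  invFun i := (σ.symm i.succ).pred
    (fun hc => Fin.succ_ne_zero i (by
      have := congrArg σ hc; rwa [Equiv.apply_symm_apply, h0] at this))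
  left_inv i := by simp
  right_inv i := by simp

def dropMax {n : ℕ} (σ : Perm (Fin (n+1))) (h0 : σ 0 = Fin.last n) : Perm (Fin n) where
  toFun i := (σ i.succ).castPred
    (fun hc => Fin.succ_ne_zero i (σ.injective (hc.trans h0.symm)))
  invFun i := (σ.symm i.castSucc).pred
    (fun hc => by
      have := congrArg σ hc
      rw [Equiv.apply_symm_apply, h0] at this
      exact (Fin.castSucc_lt_last i).ne this)
  left_inv i := by simp
  right_inv i := by simp

def dropLastZero {n : ℕ} (σ : Perm (Fin (n+1))) (h0 : σ (Fin.last n) = 0) : Perm (Fin n) where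
  toFun i := (σ i.castSucc).pred
    (fun hc => (Fin.castSucc_lt_last i).ne (σ.injective (hc.trans h0.symm)))
  invFun i := (σ.symm i.succ).castPred
    (fun hc => Fin.succ_ne_zero i (by
      have := congrArg σ hc; rwa [Equiv.apply_symm_apply, h0] at this))
  left_inv i := by simp
  right_inv i := by simp

@[simp] lemma consZero_zero {n : ℕ} (σ : Perm (Fin n)) : consZero σ 0 = 0 := rfl
@[simp] lemma consZero_succ {n : ℕ} (σ : Perm (Fin n)) (i : Fin n) :
    consZero σ i.succ = (σ i).succ := by simp [consZero]
@[simp] lemma consMax_zero {n : ℕ} (σ : Perm (Fin n)) : consMax σ 0 = Fin.last n := rfl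
@[simp] lemma consMax_succ {n : ℕ} (σ : Perm (Fin n)) (i : Fin n) :
    consMax σ i.succ = (σ i).castSucc := by simp [consMax]
@[simp] lemma snocZero_last {n : ℕ} (σ : Perm (Fin n)) : snocZero σ (Fin.last n) = 0 := by
  simp [snocZero]
@[simp] lemma snocZero_castSucc {n : ℕ} (σ : Perm (Fin n)) (i : Fin n) :
    snocZero σ i.castSucc = (σ i).succ := by simp [snocZero]
@[simp] lemma dropZero_apply {n : ℕ} (σ : Perm (Fin (n+1))) (h0 : σ 0 = 0) (i : Fin n) :
    dropZero σ h0 i = (σ i.succ).pred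
      (fun hc => Fin.succ_ne_zero i (σ.injective (hc.trans h0.symm))) := rfl
@[simp] lemma dropMax_apply {n : ℕ} (σ : Perm (Fin (n+1))) (h0 : σ 0 = Fin.last n) (i : Fin n) :
    dropMax σ h0 i = (σ i.succ).castPred
      (fun hc => Fin.succ_ne_zero i (σ.injective (hc.trans h0.symm))) := rfl
@[simp] lemma dropLastZero_apply {n : ℕ} (σ : Perm (Fin (n+1))) (h0 : σ (Fin.last n) = 0)
    (i : Fin n) : dropLastZero σ h0 i = (σ i.castSucc).pred
      (fun hc => (Fin.castSucc_lt_last i).ne (σ.injective (hc.trans h0.symm))) := rfl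

lemma good_dropMax {n : ℕ} {σ : Perm (Fin (n+1))} {b : Fin (n+1) → Bool}
    (hG : Good (σ, b)) (h0 : σ 0 = Fin.last n) :
    Good (dropMax σ h0, b ∘ Fin.succ) := by
  constructor
  · intro i j hij hb
    simp only [dropMax_apply]
    rw [Fin.castPred_lt_castPred_iff]
    exact hG.1 i.succ j.succ (Fin.succ_lt_succ_iff.mpr hij) hb
  · intro i j hij hbi hbj
    simp only [dropMax_apply]
    rw [Fin.castPred_lt_castPred_iff]
    exact hG.2 i.succ j.succ (Fin.succ_lt_succ_iff.mpr hij) hbi hbj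

lemma good_dropZero {n : ℕ} {σ : Perm (Fin (n+1))} {b : Fin (n+1) → Bool}
    (hG : Good (σ, b)) (h0 : σ 0 = 0) :
    Good (dropZero σ h0, b ∘ Fin.succ) := by
  constructor
  · intro i j hij hb
    simp only [dropZero_apply]
    rw [Fin.pred_lt_pred_iff]
    exact hG.1 i.succ j.succ (Fin.succ_lt_succ_iff.mpr hij) hb
  · intro i j hij hbi hbj
    simp only [dropZero_apply]
    rw [Fin.pred_lt_pred_iff]
    exact hG.2 i.succ j.succ (Fin.succ_lt_succ_iff.mpr hij) hbi hbj

lemma good_dropLastZero {n : ℕ} {σ : Perm (Fin (n+1))} {b : Fin (n+1) → Bool}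
    (hG : Good (σ, b)) (h0 : σ (Fin.last n) = 0) :
    Good (dropLastZero σ h0, b ∘ Fin.castSucc) := by
  constructor
  · intro i j hij hb
    simp only [dropLastZero_apply]
    rw [Fin.pred_lt_pred_iff]
    exact hG.1 i.castSucc j.castSucc (Fin.castSucc_lt_castSucc_iff.mpr hij) hb
  · intro i j hij hbi hbj
    simp only [dropLastZero_apply]
    rw [Fin.pred_lt_pred_iff]
    exact hG.2 i.castSucc j.castSucc (Fin.castSucc_lt_castSucc_iff.mpr hij) hbi hbj

lemma good_consMax {n : ℕ} {σ : Perm (Fin n)} {b : Fin n → Bool} (hG : Good (σ, b)) :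
    Good (consMax σ, Fin.cases false b) := by
  constructor
  · intro i j hij hb
    cases i using Fin.cases with
    | zero =>
      cases j using Fin.cases with
      | zero => exact absurd hij (lt_irrefl _)
      | succ j => simp [Fin.castSucc_lt_last]
    | succ i =>
      cases j using Fin.cases with
      | zero => exact absurd hij (by simp [Fin.le_def])
      | succ j =>
        simp only [consMax_succ, Fin.castSucc_lt_castSucc_iff]
        simp only [Fin.cases_succ] at hb
        exact hG.1 i j (Fin.succ_lt_succ_iff.mp hij) hb
  · intro i j hij hbi hbj
    cases i using Fin.cases with
    | zero => simp at hbi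
    | succ i =>
      cases j using Fin.cases with
      | zero => exact absurd hij (by simp [Fin.le_def])
      | succ j =>
        simp only [consMax_succ, Fin.castSucc_lt_castSucc_iff]
        simp only [Fin.cases_succ] at hbi hbj
        exact hG.2 i j (Fin.succ_lt_succ_iff.mp hij) hbi hbj

lemma good_consZero {n : ℕ} {σ : Perm (Fin n)} {b : Fin n → Bool} (hG : Good (σ, b)) :
    Good (consZero σ, Fin.cases true b) := by
  constructor
  · intro i j hij hb
    cases i using Fin.cases with
    | zero => simp at hb
    | succ i =>
      cases j using Fin.cases with
      | zero => exact absurd hij (by simp [Fin.le_def])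
      | succ j =>
        simp only [consZero_succ, Fin.succ_lt_succ_iff]
        simp only [Fin.cases_succ] at hb
        exact hG.1 i j (Fin.succ_lt_succ_iff.mp hij) hb
  · intro i j hij hbi hbj
    cases i using Fin.cases with
    | zero =>
      cases j using Fin.cases with
      | zero => exact absurd hij (lt_irrefl _)
      | succ j => simp [Fin.succ_pos]
    | succ i =>
      cases j using Fin.cases with
      | zero => exact absurd hij (by simp [Fin.le_def])
      | succ j =>
        simp only [consZero_succ, Fin.succ_lt_succ_iff]
        simp only [Fin.cases_succ] at hbi hbj
        exact hG.2 i j (Fin.succ_lt_succ_iff.mp hij) hbi hbj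

lemma good_snocZero {n : ℕ} {σ : Perm (Fin n)} {b : Fin n → Bool} (hG : Good (σ, b)) :
    Good (snocZero σ, Fin.lastCases false b) := by
  constructor
  · intro i j hij hb
    cases j using Fin.lastCases with
    | last =>
      cases i using Fin.lastCases with
      | last => exact absurd hij (lt_irrefl _)
      | cast i => simp [Fin.succ_pos]
    | cast j =>
      cases i using Fin.lastCases with
      | last => exact absurd hij (by simp [Fin.le_def])
      | cast i =>
        simp only [snocZero_castSucc, Fin.succ_lt_succ_iff]
        simp only [Fin.lastCases_castSucc] at hb
        exact hG.1 i j (Fin.castSucc_lt_castSucc_iff.mp hij) hb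
  · intro i j hij hbi hbj
    cases j using Fin.lastCases with
    | last => simp at hbj
    | cast j =>
      cases i using Fin.lastCases with
      | last => exact absurd hij (by simp [Fin.le_def])
      | cast i =>
        simp only [snocZero_castSucc, Fin.succ_lt_succ_iff]
        simp only [Fin.lastCases_castSucc] at hbi hbj
        exact hG.2 i j (Fin.castSucc_lt_castSucc_iff.mp hij) hbi hbj

lemma good_first_unbarred {n : ℕ} {σ : Perm (Fin (n+1))} {b : Fin (n+1) → Bool}
    (hG : Good (σ, b)) (hb : b 0 = false) : σ 0 = Fin.last n := by
  by_contra h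
  set j := σ.symm (Fin.last n) with hjdef
  have hj : σ j = Fin.last n := σ.apply_symm_apply _
  have hj0 : j ≠ 0 := fun hc => h (hc ▸ hj)
  have hlt : σ j < σ 0 := hG.1 0 j (Fin.pos_of_ne_zero hj0) hb
  rw [hj] at hlt
  exact absurd hlt (not_lt.mpr (Fin.le_last _))

lemma good_first_barred_ne_zero {n : ℕ} {σ : Perm (Fin (n+1))} {b : Fin (n+1) → Bool}
    (hG : Good (σ, b)) (hb : b 0 = true) (hs : σ 0 ≠ 0) :
    σ (Fin.last n) = 0 ∧ b (Fin.last n) = false := by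
  set q := σ.symm 0 with hqdef
  have hq : σ q = 0 := σ.apply_symm_apply _
  have hq0 : q ≠ 0 := fun hc => hs (hc ▸ hq)
  have hbq : b q = false := by
    by_contra hc
    rw [Bool.not_eq_false] at hc
    have := hG.2 0 q (Fin.pos_of_ne_zero hq0) hb hc
    rw [hq] at this
    exact absurd this (Fin.not_lt_zero _)
  have hql : q = Fin.last n := by
    by_contra hc
    have hlt : q < Fin.last n := lt_of_le_of_ne (Fin.le_last _) hc
    have := hG.1 q (Fin.last n) hlt hbq
    rw [hq] at this
    exact absurd this (Fin.not_lt_zero _)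
  rw [← hql]
  exact ⟨hq, hbq⟩

/-- Avoiders of length n+1 with first entry unbarred ≃ avoiders of length n. -/
def equivE1 (n : ℕ) :
    {α : SignedPerm (n+1) // Good α ∧ α.2 0 = false} ≃ {α : SignedPerm n // Good α} where
  toFun x := ⟨(dropMax x.1.1 (good_first_unbarred x.2.1 x.2.2), x.1.2 ∘ Fin.succ),
    good_dropMax x.2.1 _⟩
  invFun y := ⟨(consMax y.1.1, Fin.cases false y.1.2), good_consMax y.2, by simp⟩
  left_inv x := by
    apply Subtype.ext
    apply Prod.ext
    · apply Equiv.ext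
      intro i
      cases i using Fin.cases with
      | zero => simp [good_first_unbarred x.2.1 x.2.2]
      | succ i => simp
    · funext i
      cases i using Fin.cases with
      | zero => simp [x.2.2.symm]
      | succ i => simp
  right_inv y := by
    apply Subtype.ext
    apply Prod.ext
    · apply Equiv.ext
      intro i
      simp
    · funext i
      simp

/-- Avoiders of length n+1, first barred, first value 0 ≃ avoiders of length n. -/
def equivE2a (n : ℕ) :
    {α : SignedPerm (n+1) // (Good α ∧ α.2 0 = true) ∧ α.1 0 = 0} ≃
      {α : SignedPerm n // Good α} where
  toFun x := ⟨(dropZero x.1.1 x.2.2, x.1.2 ∘ Fin.succ), good_dropZero x.2.1.1 _⟩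
  invFun y := ⟨(consZero y.1.1, Fin.cases true y.1.2), ⟨good_consZero y.2, by simp⟩, rfl⟩
  left_inv x := by
    apply Subtype.ext
    apply Prod.ext
    · apply Equiv.ext
      intro i
      cases i using Fin.cases with
      | zero => simp [x.2.2]
      | succ i => simp
    · funext i
      cases i using Fin.cases with
      | zero => simp [x.2.1.2.symm]
      | succ i => simp
  right_inv y := by
    apply Subtype.ext
    apply Prod.ext
    · apply Equiv.ext
      intro i
      simp
    · funext i
      simp

/-- Avoiders of length n+2, first barred, first value ≠ 0 ≃
    avoiders of length n+1 with first barred. -/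
def equivE2b (n : ℕ) :
    {α : SignedPerm (n+2) // (Good α ∧ α.2 0 = true) ∧ α.1 0 ≠ 0} ≃
      {α : SignedPerm (n+1) // Good α ∧ α.2 0 = true} where
  toFun x := ⟨(dropLastZero x.1.1 (good_first_barred_ne_zero x.2.1.1 x.2.1.2 x.2.2).1,
      x.1.2 ∘ Fin.castSucc),
    good_dropLastZero x.2.1.1 _, by
      have : (0 : Fin (n+2)) = (0 : Fin (n+1)).castSucc := by simp
      simpa [Function.comp] using x.2.1.2⟩
  invFun y := ⟨(snocZero y.1.1, Fin.lastCases false y.1.2),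
    ⟨good_snocZero y.2.1, by
      have h0 : (0 : Fin (n+2)) = (0 : Fin (n+1)).castSucc := by simp
      show Fin.lastCases false y.1.2 (0 : Fin (n+2)) = true
      rw [h0, Fin.lastCases_castSucc]
      exact y.2.2⟩, by
      have h0 : (0 : Fin (n+2)) = (0 : Fin (n+1)).castSucc := by simp
      rw [h0, snocZero_castSucc]
      exact Fin.succ_ne_zero _⟩
  left_inv x := by
    obtain ⟨hlast, hblast⟩ := good_first_barred_ne_zero x.2.1.1 x.2.1.2 x.2.2
    apply Subtype.ext
    apply Prod.ext
    · apply Equiv.ext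
      intro i
      cases i using Fin.lastCases with
      | last => simp [hlast]
      | cast i => simp
    · funext i
      cases i using Fin.lastCases with
      | last => simp [hblast.symm]
      | cast i => simp
  right_inv y := by
    apply Subtype.ext
    apply Prod.ext
    · apply Equiv.ext
      intro i
      simp
    · funext i
      simp

noncomputable def Fc (n : ℕ) : ℕ := Nat.card {α : SignedPerm n // Good α}
noncomputable def Gc (n : ℕ) : ℕ :=
  Nat.card {α : SignedPerm (n+1) // Good α ∧ α.2 0 = true}

lemma Fc_succ (n : ℕ) : Fc (n+1) = Gc n + Fc n := by
  unfold Fc Gc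
  rw [← Nat.card_congr (Equiv.sumCompl (fun x : {α : SignedPerm (n+1) // Good α} =>
    x.1.2 0 = true)), Nat.card_sum]
  congr 1
  · exact Nat.card_congr (Equiv.subtypeSubtypeEquivSubtypeInter
      (fun α : SignedPerm (n+1) => Good α) (fun α => α.2 0 = true))
  · refine Nat.card_congr (((Equiv.subtypeSubtypeEquivSubtypeInter
      (fun α : SignedPerm (n+1) => Good α) (fun α => ¬ α.2 0 = true)).trans
      (Equiv.subtypeEquivRight (fun α => ?_))).trans (equivE1 n))
    simp
lemma Gc_succ (n : ℕ) : Gc (n+1) = Fc (n+1) + Gc n := by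
  unfold Fc Gc
  rw [← Nat.card_congr (Equiv.sumCompl
    (fun x : {α : SignedPerm (n+2) // Good α ∧ α.2 0 = true} => x.1.1 0 = 0)),
    Nat.card_sum]
  congr 1
  · exact Nat.card_congr ((Equiv.subtypeSubtypeEquivSubtypeInter
      (fun α : SignedPerm (n+2) => Good α ∧ α.2 0 = true) (fun α => α.1 0 = 0)).trans
      (equivE2a (n+1)))
  · exact Nat.card_congr ((Equiv.subtypeSubtypeEquivSubtypeInter
      (fun α : SignedPerm (n+2) => Good α ∧ α.2 0 = true) (fun α => ¬ α.1 0 = 0)).trans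
      (equivE2b n))

lemma Fc_zero : Fc 0 = 1 := by
  unfold Fc
  rw [Nat.card_eq_one_iff_unique]
  constructor
  · constructor
    intro a b
    apply Subtype.ext
    apply Prod.ext
    · apply Equiv.ext; intro i; exact i.elim0
    · funext i; exact i.elim0
  · exact ⟨(1, fun _ => false), ⟨fun i => i.elim0, fun i => i.elim0⟩⟩

lemma Gc_zero : Gc 0 = 1 := by
  unfold Gc
  rw [Nat.card_eq_one_iff_unique]
  constructor
  · constructor
    intro a b
    apply Subtype.ext
    apply Prod.ext
    · apply Equiv.ext; intro i
      rw [Fin.eq_zero (a.1.1 i), Fin.eq_zero (b.1.1 i)]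
    · funext i
      rw [Fin.eq_zero i, a.2.2, b.2.2]
  · refine ⟨(1, fun _ => true), ⟨⟨fun i j h _ => absurd h ?_, fun i j h _ _ => absurd h ?_⟩,
      rfl⟩⟩ <;>
    · rw [Fin.eq_zero i, Fin.eq_zero j]; exact lt_irrefl _

lemma Fc_Gc (n : ℕ) : Fc n = Nat.fib (2*n+1) ∧ Gc n = Nat.fib (2*n+2) := by
  induction n with
  | zero => simp [Fc_zero, Gc_zero]
  | succ n ih =>
    have fib3 : Nat.fib (2*(n+1)+1) = Nat.fib (2*n+2) + Nat.fib (2*n+1) := by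
      have h : 2*(n+1)+1 = (2*n+1)+2 := by ring
      rw [h, Nat.fib_add_two]
      have h2 : 2*n+1+1 = 2*n+2 := by ring
      rw [h2]
      omega
    have fib4 : Nat.fib (2*(n+1)+2) = Nat.fib (2*(n+1)+1) + Nat.fib (2*n+2) := by
      have h : 2*(n+1)+2 = (2*n+2)+2 := by ring
      rw [h, Nat.fib_add_two]
      have h2 : 2*n+2+1 = 2*(n+1)+1 := by ring
      rw [h2]
      omega
    have h1 : Fc (n+1) = Nat.fib (2*(n+1)+1) := by
      rw [Fc_succ, ih.1, ih.2, fib3]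
    refine ⟨h1, ?_⟩
    rw [Gc_succ, h1, ih.2, fib4]

/-- b_n(T₆) with T₆ = {12,12̄,2̄1̄} equals the Fibonacci number F_{2n+1}. -/
theorem stmt8 (n : ℕ) :
    bn n {p12, p12b, p2b1b} = Nat.fib (2 * n + 1) := by
  have : bn n {p12, p12b, p2b1b} = Fc n := by
    unfold bn Fc
    exact Nat.card_congr (Equiv.subtypeEquivRight (fun α => avoids_iff_good α))
  rw [this, (Fc_Gc n).1]
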